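/- arXiv:1308.6342 — 2 statements merged into one kernel-verified Lean document; each statement's English description precedes it below -/
import Mathlib

section
/- Maximum likelihood estimation and marginalization commute (Theorem 2): Let C be a finite collection of nonempty subsets of S, q ∈ C, and A_q its 1-neighborhood. Let p̃ be a probability distribution on configurations whose marginal p̃_{A_q∖q} is strictly positive, define p̂(x) = p̃_{A_q}(x_{A_q})·p̃_{S∖q}(x_{S∖q}) / p̃_{A_q∖q}(x_{A_q∖q}), and let F be the set of all positive Gibbs distributions over C. Assume p̂ ∈ F. If p* ∈ F maximizes the expected log-likelihood p ↦ Σ_x p̃(x)·log p(x) over F, then the marginal of p* on A_q equals p̃_{A_q}, which is itself a maximum likelihood estimate for p̃_{A_q} in the family { r_{A_q} : r ∈ F } of marginals of members of F. -/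
open Finset

/-- A potential `E` on the subset `c` of sites: a real-valued function of
configurations that depends only on the coordinates in `c`. -/
def DependsOnlyOn {S : Type*} {V : S → Type*} (c : Finset S) (E : (∀ s, V s) → ℝ) : Prop :=
  ∀ x y : ∀ s, V s, (∀ s ∈ c, x s = y s) → E x = E y

/-- A potential is normalized with respect to zero if it vanishes on every
configuration having a zero coordinate inside `c`. -/
def NormalizedZero {S : Type*} {V : S → Type*} [∀ s, Zero (V s)] (c : Finset S)
    (E : (∀ s, V s) → ℝ) : Prop :=
  ∀ x : ∀ s, V s, (∃ t ∈ c, x t = 0) → E x = 0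

/-- The marginal of `p` on `U`: `p_U(y) = Σ { p x : x_U = y }`. -/
def marginal {S : Type*} {V : S → Type*} [Fintype S] [DecidableEq S]
    [∀ s, Fintype (V s)] [∀ s, DecidableEq (V s)]
    (p : (∀ s, V s) → ℝ) (U : Finset S) (y : ∀ s : U, V s) : ℝ :=
  ∑ x ∈ Finset.univ.filter (fun x : ∀ s, V s => ∀ s : U, x s.1 = y s), p x

/-- `p` is a (positive, normalized) Gibbs distribution over the clique system `C`:
`p x = (1/Z) exp (−Σ_{c ∈ C} E_c(x_c))` for some partition constant `Z > 0` and
potentials `E_c` depending only on the coordinates in `c`, and `p` sums to one. -/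
def IsGibbsDistribution {S : Type*} {V : S → Type*} [Fintype S] [DecidableEq S]
    [∀ s, Fintype (V s)] (C : Finset (Finset S)) (p : (∀ s, V s) → ℝ) : Prop :=
  ∃ (E : Finset S → (∀ s, V s) → ℝ) (Z : ℝ), 0 < Z ∧
    (∀ c ∈ C, DependsOnlyOn c (E c)) ∧
    (∀ x, p x = (1 / Z) * Real.exp (-(∑ c ∈ C, E c x))) ∧
    (∑ x, p x = 1)

/-!
The estimate `p̂` glues `p̃_A` and `p̃_{S∖q}` along their common marginal `p̃_{A∖q}`; since
`A ∪ (S∖q) = S`, it has the same marginals as `p̃` on `A` and on `S∖q`. The log of a Gibbs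
distribution over `C` splits into a function of `x_A` (the cliques meeting `q`) plus a function of
`x_{S∖q}` (the others), so every member of `F` has the same expected log-likelihood under `p̃` as
under `p̂`. Hence `p*` maximizes the likelihood of `p̂ ∈ F` over `F`, and the equality case of
Gibbs' inequality forces `p* = p̂`, whose marginal on `A` is `p̃_A`. The last claim is Gibbs'
inequality for `p̃_A`.
-/

open Real InformationTheory

lemma mul_klFun_div (p : ℝ) {r : ℝ} (hr : 0 < r) :
    r * klFun (p / r) = p * log p - p * log r + r - p := by
  rcases eq_or_ne p 0 with rfl | hp
  · simp [klFun_zero]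
  · rw [klFun_apply, log_div hp hr.ne']
    field_simp

section GibbsInequality

variable {ι : Type*} [Fintype ι] {p r : ι → ℝ}

lemma sum_mul_log_sub_sum_mul_log_eq_sum_mul_klFun (hr : ∀ i, 0 < r i)
    (hsum : ∑ i, p i = ∑ i, r i) :
    ∑ i, p i * log (p i) - ∑ i, p i * log (r i) = ∑ i, r i * klFun (p i / r i) := by
  simp only [fun i => mul_klFun_div (p i) (hr i), sum_sub_distrib, sum_add_distrib, hsum]
  ring

lemma sum_mul_log_le_sum_mul_log (hp : ∀ i, 0 ≤ p i) (hr : ∀ i, 0 < r i)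
    (hsum : ∑ i, p i = ∑ i, r i) : ∑ i, p i * log (r i) ≤ ∑ i, p i * log (p i) := by
  have hkl : 0 ≤ ∑ i, r i * klFun (p i / r i) :=
    sum_nonneg fun i _ => mul_nonneg (hr i).le (klFun_nonneg (div_nonneg (hp i) (hr i).le))
  linarith [sum_mul_log_sub_sum_mul_log_eq_sum_mul_klFun hr hsum]

lemma eq_of_sum_mul_log_le (hp : ∀ i, 0 ≤ p i) (hr : ∀ i, 0 < r i)
    (hsum : ∑ i, p i = ∑ i, r i) (h : ∑ i, p i * log (p i) ≤ ∑ i, p i * log (r i)) : p = r := by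
  have hnonneg : ∀ i ∈ univ, 0 ≤ r i * klFun (p i / r i) := fun i _ =>
    mul_nonneg (hr i).le (klFun_nonneg (div_nonneg (hp i) (hr i).le))
  have hzero : ∑ i, r i * klFun (p i / r i) = 0 :=
    le_antisymm (by linarith [sum_mul_log_sub_sum_mul_log_eq_sum_mul_klFun hr hsum])
      (sum_nonneg hnonneg)
  funext i
  have hi := (sum_eq_zero_iff_of_nonneg hnonneg).1 hzero i (mem_univ i)
  rwa [mul_eq_zero, or_iff_right (hr i).ne', klFun_eq_zero_iff (div_nonneg (hp i) (hr i).le),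
    div_eq_one_iff_eq (hr i).ne'] at hi

end GibbsInequality

lemma exists_restrict_eq {S : Type*} [DecidableEq S] {V : S → Type*} [∀ s, Nonempty (V s)]
    (U : Finset S) (y : ∀ s : U, V s) : ∃ x : ∀ s, V s, U.restrict x = y :=
  ⟨fun s => if h : s ∈ U then y ⟨s, h⟩ else Classical.arbitrary _, funext fun s => dif_pos s.2⟩

lemma DependsOnlyOn.exists_eq_comp_restrict {S : Type*} {V : S → Type*} {U : Finset S}
    {f : (∀ s, V s) → ℝ} (hf : DependsOnlyOn U f) :
    ∃ F : (∀ s : U, V s) → ℝ, ∀ x, f x = F (U.restrict x) := by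
  obtain ⟨F, hF⟩ := dependsOn_iff_exists_comp.1 (show DependsOn f (U : Set S) from hf)
  exact ⟨F, congrFun hF⟩

section Marginal

variable {S : Type*} [Fintype S] [DecidableEq S] {V : S → Type*}
  [∀ s, Fintype (V s)] [∀ s, DecidableEq (V s)]

lemma marginal_eq_sum_restrict (p : (∀ s, V s) → ℝ) (U : Finset S) (y : ∀ s : U, V s) :
    marginal p U y = ∑ x with U.restrict x = y, p x := by
  simp only [marginal, funext_iff, Finset.restrict]

lemma sum_marginal_mul (p : (∀ s, V s) → ℝ) (U : Finset S) (F : (∀ s : U, V s) → ℝ) :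
    ∑ y, marginal p U y * F y = ∑ x, p x * F (U.restrict x) := by
  rw [← sum_fiberwise univ U.restrict]
  refine sum_congr rfl fun y _ => ?_
  rw [marginal_eq_sum_restrict, sum_mul]
  exact sum_congr rfl fun x hx => by rw [(mem_filter.1 hx).2]

lemma sum_marginal (p : (∀ s, V s) → ℝ) (U : Finset S) : ∑ y, marginal p U y = ∑ x, p x := by
  simpa using sum_marginal_mul p U 1

lemma marginal_nonneg {p : (∀ s, V s) → ℝ} (hp : ∀ x, 0 ≤ p x) (U : Finset S)
    (y : ∀ s : U, V s) : 0 ≤ marginal p U y :=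
  sum_nonneg fun x _ => hp x

lemma marginal_pos [∀ s, Nonempty (V s)] {p : (∀ s, V s) → ℝ} (hp : ∀ x, 0 < p x)
    (U : Finset S) (y : ∀ s : U, V s) : 0 < marginal p U y := by
  obtain ⟨x, hx⟩ := exists_restrict_eq U y
  rw [marginal_eq_sum_restrict]
  exact sum_pos (fun x _ => hp x) ⟨x, mem_filter.2 ⟨mem_univ x, hx⟩⟩

lemma DependsOnlyOn.sum_mul_eq_of_marginal_eq {U : Finset S} {f : (∀ s, V s) → ℝ}
    (hf : DependsOnlyOn U f) {p p' : (∀ s, V s) → ℝ} (h : marginal p U = marginal p' U) :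
    ∑ x, p x * f x = ∑ x, p' x * f x := by
  obtain ⟨F, hF⟩ := hf.exists_eq_comp_restrict
  simp only [hF, ← sum_marginal_mul, h]

lemma sum_marginal_restrict_eq_marginal_inter (p : (∀ s, V s) → ℝ) {U W : Finset S}
    (hUW : ∀ s, s ∈ U ∨ s ∈ W) (x₀ : ∀ s, V s) :
    ∑ x with U.restrict x = U.restrict x₀, marginal p W (W.restrict x) =
      marginal p (U ∩ W) ((U ∩ W).restrict x₀) := by
  simp only [marginal_eq_sum_restrict]
  -- given `x'` agreeing with `x₀` on `U ∩ W`, the only `x` with `x_U = x₀_U` and `x_W = x'_W`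
  -- is `U.piecewise x₀ x'`, because `U ∪ W` covers everything
  rw [sum_comm' (t' := {x' | (U ∩ W).restrict x' = (U ∩ W).restrict x₀})
    (s' := fun x' => {U.piecewise x₀ x'})]
  · simp
  intro x x'
  simp only [mem_filter, mem_univ, true_and, mem_singleton, funext_iff, Finset.restrict,
    Subtype.forall, mem_inter, Finset.piecewise]
  grind

noncomputable def marginalGlue (p : (∀ s, V s) → ℝ) (U W D : Finset S) : (∀ s, V s) → ℝ :=
  fun x => marginal p U (U.restrict x) * marginal p W (W.restrict x) / marginal p D (D.restrict x)

lemma marginalGlue_comm (p : (∀ s, V s) → ℝ) (U W D : Finset S) :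
    marginalGlue p U W D = marginalGlue p W U D := by
  funext x
  simp only [marginalGlue, mul_comm]

lemma marginal_marginalGlue_left [∀ s, Nonempty (V s)] (p : (∀ s, V s) → ℝ)
    {U W D : Finset S} (hUW : ∀ s, s ∈ U ∨ s ∈ W) (hD : U ∩ W = D)
    (hne : ∀ z, marginal p D z ≠ 0) : marginal (marginalGlue p U W D) U = marginal p U := by
  subst hD
  funext y
  obtain ⟨x₀, rfl⟩ := exists_restrict_eq U y
  calc _ = ∑ x with U.restrict x = U.restrict x₀, marginal p U (U.restrict x₀) /
        marginal p (U ∩ W) ((U ∩ W).restrict x₀) * marginal p W (W.restrict x) := by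
        rw [marginal_eq_sum_restrict]
        refine sum_congr rfl fun x hx => ?_
        have hU : U.restrict x = U.restrict x₀ := (mem_filter.1 hx).2
        have hUW : (U ∩ W).restrict x = (U ∩ W).restrict x₀ := by
          rw [← restrict₂_comp_restrict inter_subset_left, Function.comp_apply,
            Function.comp_apply, hU]
        rw [marginalGlue, hU, hUW]
        ring
    _ = _ := by
        rw [← mul_sum, sum_marginal_restrict_eq_marginal_inter p hUW, div_mul_cancel₀ _ (hne _)]

lemma marginal_marginalGlue_right [∀ s, Nonempty (V s)] (p : (∀ s, V s) → ℝ)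
    {U W D : Finset S} (hUW : ∀ s, s ∈ U ∨ s ∈ W) (hD : U ∩ W = D)
    (hne : ∀ z, marginal p D z ≠ 0) : marginal (marginalGlue p U W D) W = marginal p W := by
  rw [marginalGlue_comm]
  exact marginal_marginalGlue_left p (fun s => (hUW s).symm) (inter_comm W U ▸ hD) hne

end Marginal

namespace IsGibbsDistribution

variable {S : Type*} [Fintype S] [DecidableEq S] {V : S → Type*} [∀ s, Fintype (V s)]
  {C : Finset (Finset S)} {p : (∀ s, V s) → ℝ}

lemma pos (hp : IsGibbsDistribution C p) (x : ∀ s, V s) : 0 < p x := by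
  obtain ⟨E, Z, hZ, -, hform, -⟩ := hp
  rw [hform x]
  positivity

lemma sum_eq_one (hp : IsGibbsDistribution C p) : ∑ x, p x = 1 := by
  obtain ⟨-, -, -, -, -, h⟩ := hp
  exact h

lemma exists_log_eq_add (hp : IsGibbsDistribution C p) {q A : Finset S}
    (hA : ∀ c ∈ C, (c ∩ q).Nonempty → c ⊆ A) :
    ∃ f g : (∀ s, V s) → ℝ, DependsOnlyOn A f ∧ DependsOnlyOn (univ \ q) g ∧
      ∀ x, log (p x) = f x + g x := by
  obtain ⟨E, Z, hZ, hdep, hform, -⟩ := hp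
  refine ⟨fun x => -∑ c ∈ C with (c ∩ q).Nonempty, E c x,
    fun x => -∑ c ∈ C with ¬(c ∩ q).Nonempty, E c x - log Z, ?_, ?_, fun x => ?_⟩
  · intro x y hxy
    simp only [neg_inj]
    refine sum_congr rfl fun c hc => ?_
    obtain ⟨hcC, hcq⟩ := mem_filter.1 hc
    exact hdep c hcC x y fun s hs => hxy s (hA c hcC hcq hs)
  · intro x y hxy
    simp only [sub_left_inj, neg_inj]
    refine sum_congr rfl fun c hc => ?_
    obtain ⟨hcC, hcq⟩ := mem_filter.1 hc
    refine hdep c hcC x y fun s hs => hxy s (mem_sdiff.2 ⟨mem_univ s, fun hsq => hcq ?_⟩)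
    exact ⟨s, mem_inter.2 ⟨hs, hsq⟩⟩
  · rw [hform x, log_mul (by positivity) (exp_pos _).ne', log_exp, one_div, log_inv,
      ← sum_filter_add_sum_filter_not C (fun c => (c ∩ q).Nonempty)]
    ring

lemma sum_mul_log_eq_of_marginal_eq [∀ s, DecidableEq (V s)] (hp : IsGibbsDistribution C p)
    {q A : Finset S} (hA : ∀ c ∈ C, (c ∩ q).Nonempty → c ⊆ A) {p₁ p₂ : (∀ s, V s) → ℝ}
    (h₁ : marginal p₁ A = marginal p₂ A) (h₂ : marginal p₁ (univ \ q) = marginal p₂ (univ \ q)) :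
    ∑ x, p₁ x * log (p x) = ∑ x, p₂ x * log (p x) := by
  obtain ⟨f, g, hf, hg, hlog⟩ := hp.exists_log_eq_add hA
  simp only [hlog, mul_add, sum_add_distrib, hf.sum_mul_eq_of_marginal_eq h₁,
    hg.sum_mul_eq_of_marginal_eq h₂]

end IsGibbsDistribution

theorem ml_and_marginalization_commute_general
    {S : Type*} [Fintype S] [DecidableEq S] {V : S → Type*}
    [∀ s, Fintype (V s)] [∀ s, DecidableEq (V s)]
    (C : Finset (Finset S))
    (q : Finset S) (hq : q ∈ C)
    (A : Finset S) (hA : A = (C.filter fun c => (c ∩ q).Nonempty).biUnion id)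
    (ptilde : (∀ s, V s) → ℝ)
    (hpt_nonneg : ∀ x, 0 ≤ ptilde x) (hpt_sum : ∑ x, ptilde x = 1)
    (hpos : ∀ z : ∀ s : (A \ q : Finset S), V s, 0 < marginal ptilde (A \ q) z)
    (phat : (∀ s, V s) → ℝ)
    (hphat : ∀ x, phat x =
      marginal ptilde A (A.restrict x) *
        marginal ptilde (Finset.univ \ q) ((Finset.univ \ q).restrict x) /
        marginal ptilde (A \ q) ((A \ q).restrict x))
    (hphatF : IsGibbsDistribution C phat)
    (pstar : (∀ s, V s) → ℝ)
    (hstar : IsGibbsDistribution C pstar)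
    (hmax : ∀ p : (∀ s, V s) → ℝ, IsGibbsDistribution C p →
      ∑ x, ptilde x * Real.log (p x) ≤ ∑ x, ptilde x * Real.log (pstar x)) :
    (∀ y : ∀ s : A, V s, marginal pstar A y = marginal ptilde A y) ∧
    marginal ptilde A ∈
      {g : (∀ s : A, V s) → ℝ | ∃ r, IsGibbsDistribution C r ∧ g = marginal r A} ∧
    ∀ r : (∀ s, V s) → ℝ, IsGibbsDistribution C r →
      ∑ y : ∀ s : A, V s, marginal ptilde A y * Real.log (marginal r A y) ≤
        ∑ y : ∀ s : A, V s, marginal ptilde A y * Real.log (marginal ptilde A y) := by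
  have hconf : Nonempty (∀ s, V s) := by
    by_contra h
    simp [not_nonempty_iff.1 h] at hpt_sum
  have : ∀ s, Nonempty (V s) := fun s => ⟨hconf.some s⟩
  have hsub : ∀ c ∈ C, (c ∩ q).Nonempty → c ⊆ A := fun c hc hcq => hA ▸
    subset_biUnion_of_mem id (mem_filter.2 ⟨hc, hcq⟩)
  have hcover : ∀ s, s ∈ A ∨ s ∈ univ \ q := fun s => by
    by_cases hs : s ∈ q
    · exact .inl (hsub q hq ⟨s, by simpa⟩ hs)
    · exact .inr (by simpa)
  have hD : A ∩ (univ \ q) = A \ q := by ext; simp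
  have hne : ∀ z, marginal ptilde (A \ q) z ≠ 0 := fun z => (hpos z).ne'
  have hglue : phat = marginalGlue ptilde A (univ \ q) (A \ q) := funext hphat
  have hA_marg : marginal phat A = marginal ptilde A :=
    hglue ▸ marginal_marginalGlue_left ptilde hcover hD hne
  have hq_marg : marginal phat (univ \ q) = marginal ptilde (univ \ q) :=
    hglue ▸ marginal_marginalGlue_right ptilde hcover hD hne
  have hlik : ∀ p, IsGibbsDistribution C p →
      ∑ x, ptilde x * log (p x) = ∑ x, phat x * log (p x) := fun p hp =>
    hp.sum_mul_log_eq_of_marginal_eq hsub hA_marg.symm hq_marg.symm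
  have hstar_eq : phat = pstar := eq_of_sum_mul_log_le (fun x => (hphatF.pos x).le) hstar.pos
    (by rw [hphatF.sum_eq_one, hstar.sum_eq_one])
    (by simpa only [hlik _ hphatF, hlik _ hstar] using hmax phat hphatF)
  subst hstar_eq
  refine ⟨congrFun hA_marg, ⟨phat, hphatF, hA_marg.symm⟩, fun r hr => ?_⟩
  exact sum_mul_log_le_sum_mul_log (marginal_nonneg hpt_nonneg A) (marginal_pos hr.pos A)
    (by rw [sum_marginal, sum_marginal, hpt_sum, hr.sum_eq_one])

/-- **Maximum likelihood estimation and marginalization commute (Theorem 2).**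
Suppose the explicit estimate `p̂` belongs to the family `F` of positive Gibbs
distributions over `C`, and `p* ∈ F` maximizes the expected log-likelihood
`p ↦ Σ_x p̃(x) log p(x)` over `F`. Then the marginal of `p*` on `A = A_q` equals
`p̃_A`, which lies in the family `{ r_A : r ∈ F }` of marginals of members of `F`
and is itself a maximum likelihood estimate for `p̃_A` in that family. -/
theorem ml_and_marginalization_commute
    {S : Type*} [Fintype S] [DecidableEq S] {V : S → Type*}
    [∀ s, Fintype (V s)] [∀ s, DecidableEq (V s)]
    (C : Finset (Finset S)) (hC : ∀ c ∈ C, c.Nonempty)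
    (q : Finset S) (hq : q ∈ C)
    (A : Finset S) (hA : A = (C.filter fun c => (c ∩ q).Nonempty).biUnion id)
    (ptilde : (∀ s, V s) → ℝ)
    (hpt_nonneg : ∀ x, 0 ≤ ptilde x) (hpt_sum : ∑ x, ptilde x = 1)
    (hpos : ∀ z : ∀ s : (A \ q : Finset S), V s, 0 < marginal ptilde (A \ q) z)
    (phat : (∀ s, V s) → ℝ)
    (hphat : ∀ x, phat x =
      marginal ptilde A (A.restrict x) *
        marginal ptilde (Finset.univ \ q) ((Finset.univ \ q).restrict x) /
        marginal ptilde (A \ q) ((A \ q).restrict x))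
    (hphatF : IsGibbsDistribution C phat)
    (pstar : (∀ s, V s) → ℝ)
    (hstar : IsGibbsDistribution C pstar)
    (hmax : ∀ p : (∀ s, V s) → ℝ, IsGibbsDistribution C p →
      ∑ x, ptilde x * Real.log (p x) ≤ ∑ x, ptilde x * Real.log (pstar x)) :
    (∀ y : ∀ s : A, V s, marginal pstar A y = marginal ptilde A y) ∧
    marginal ptilde A ∈
      {g : (∀ s : A, V s) → ℝ | ∃ r, IsGibbsDistribution C r ∧ g = marginal r A} ∧
    ∀ r : (∀ s, V s) → ℝ, IsGibbsDistribution C r →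
      ∑ y : ∀ s : A, V s, marginal ptilde A y * Real.log (marginal r A y) ≤
        ∑ y : ∀ s : A, V s, marginal ptilde A y * Real.log (marginal ptilde A y) :=
  ml_and_marginalization_commute_general C q hq A hA ptilde hpt_nonneg hpt_sum hpos phat hphat
    hphatF pstar hstar hmax
end

section
/- Population consistency of the LAP estimator: Let p be a positive Gibbs distribution over C with potentials (E_c)_{c∈C}, each normalized with respect to zero, and fix q ∈ C with 1-neighborhood A_q. Let G be any set of strictly positive probability distributions on configurations of A_q with p_{A_q} ∈ G. If r ∈ G maximizes r' ↦ Σ_y p_{A_q}(y)·log r'(y) over G, then r = p_{A_q}; consequently, writing r in its (unique) zero-normalized form r(y) = (1/Z')·exp(−Σ_c F_c(y_c)) with the sum over all nonempty c ⊆ A_q and each F_c normalized with respect to zero, one has F_q = E_q. -/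
open Finset

/-- A potential on `c ⊆ A`, viewed as a function of configurations of `A`:
it depends only on the coordinates in `c`. -/
def DependsOnlyOnSub {S : Type*} {V : S → Type*} (A c : Finset S)
    (F : (∀ s : A, V s) → ℝ) : Prop :=
  ∀ y z : ∀ s : A, V s, (∀ s : A, s.1 ∈ c → y s = z s) → F y = F z

/-- Zero-normalization for a potential on `c ⊆ A` viewed as a function of
configurations of `A`. -/
def NormalizedZeroSub {S : Type*} {V : S → Type*} [∀ s, Zero (V s)] (A c : Finset S)
    (F : (∀ s : A, V s) → ℝ) : Prop :=
  ∀ y : ∀ s : A, V s, (∃ s : A, s.1 ∈ c ∧ y s = 0) → F y = 0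

/-!
By Gibbs' inequality the maximizer of the population log-likelihood is the marginal `p_A` itself.
For the second part, evaluate `log p_A` at the configurations `xᵇ` that agree with `x` on `b ⊆ q`
and vanish elsewhere. Cliques disjoint from `q` contribute a factor that does not see the
coordinates in `q`, so up to a constant `log p_A (xᵇ)` is minus the energy of the cliques meeting
`q`, while the representation of `r = p_A` makes it `-∑ F_c (xᵇ)` up to a constant. Möbius
inversion `H ↦ ∑_{b ⊆ q} (-1)^|b| H (xᵇ)` annihilates constants and every zero-normalized
potential except the one on `q`, whence `F_q = E_q`.
-/

open Real InformationTheory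

theorem Real.eq_of_sum_mul_log_le_sum_mul_log {ι : Type*} [Fintype ι] {m r : ι → ℝ}
    (hm : ∀ i, 0 ≤ m i) (hr : ∀ i, 0 < r i) (hsum : ∑ i, m i = ∑ i, r i)
    (hle : ∑ i, m i * log (m i) ≤ ∑ i, m i * log (r i)) : m = r := by
  -- `r * klFun (m / r)` is the summand of the Kullback–Leibler divergence of `m` from `r`
  have hterm : ∀ i, r i * klFun (m i / r i) =
      (m i * log (m i) - m i * log (r i)) + (r i - m i) := by
    intro i
    rcases (hm i).eq_or_lt with h0 | hpos
    · simp [← h0, klFun_zero]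
    · rw [klFun_apply, log_div hpos.ne' (hr i).ne']
      linear_combination (log (m i) - log (r i) - 1) * mul_div_cancel₀ (m i) (hr i).ne'
  have hnonneg : ∀ i ∈ univ, 0 ≤ r i * klFun (m i / r i) :=
    fun i _ => mul_nonneg (hr i).le (klFun_nonneg (div_nonneg (hm i) (hr i).le))
  have hzero : ∑ i, r i * klFun (m i / r i) = 0 := by
    refine le_antisymm ?_ (sum_nonneg hnonneg)
    simp only [hterm, sum_add_distrib, sum_sub_distrib]
    linarith
  funext i
  have hi := (sum_eq_zero_iff_of_nonneg hnonneg).1 hzero i (mem_univ i)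
  rwa [mul_eq_zero, or_iff_right (hr i).ne', klFun_eq_zero_iff (div_nonneg (hm i) (hr i).le),
    div_eq_one_iff_eq (hr i).ne'] at hi

theorem DependsOnlyOnSub.comp_restrict {S : Type*} {V : S → Type*} {A c : Finset S}
    {F : (∀ s : A, V s) → ℝ} (hF : DependsOnlyOnSub A c F) :
    DependsOnlyOn c (fun x => F (A.restrict x)) :=
  fun _ _ hxy => hF _ _ fun s hs => hxy s hs

theorem NormalizedZeroSub.comp_restrict {S : Type*} {V : S → Type*} [∀ s, Zero (V s)]
    {A c : Finset S} (hcA : c ⊆ A) {F : (∀ s : A, V s) → ℝ} (hF : NormalizedZeroSub A c F) :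
    NormalizedZero c (fun x => F (A.restrict x)) :=
  fun _ ⟨t, htc, ht⟩ => hF _ ⟨⟨t, hcA htc⟩, htc, ht⟩

section Mobius

variable {S : Type*} [DecidableEq S] {V : S → Type*} [∀ s, Zero (V s)]

theorem Finset.sum_powerset_neg_one_pow_mul_eq_zero {q : Finset S} {t : S} (ht : t ∈ q)
    {f : Finset S → ℝ} (hf : ∀ b ⊆ q, t ∉ b → f (insert t b) = f b) :
    ∑ b ∈ q.powerset, (-1 : ℝ) ^ #b * f b = 0 := by
  rw [← insert_erase ht, sum_powerset_insert (notMem_erase t q), ← sum_add_distrib]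
  refine sum_eq_zero fun b hb => ?_
  have hbq : b ⊆ q := (mem_powerset.1 hb).trans (erase_subset t q)
  have htb : t ∉ b := fun h => notMem_erase t q (mem_powerset.1 hb h)
  rw [card_insert_of_notMem htb, hf b hbq htb, pow_succ]
  ring

theorem sum_powerset_neg_one_pow_mul_piecewise {q c : Finset S} {E : (∀ s, V s) → ℝ}
    (hdep : DependsOnlyOn c E) (hnorm : NormalizedZero c E) (x : ∀ s, V s) :
    ∑ b ∈ q.powerset, (-1 : ℝ) ^ #b * E (b.piecewise x 0) =
      if c = q then (-1) ^ #q * E x else 0 := by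
  by_cases hqc : q ⊆ c
  · have hterm : ∀ b ∈ q.powerset, (-1 : ℝ) ^ #b * E (b.piecewise x 0) =
        if b = c then (-1) ^ #b * E x else 0 := by
      intro b hb
      split_ifs with hbc
      · subst hbc
        exact congrArg _ (hdep _ _ fun s hs => piecewise_eq_of_mem _ _ _ hs)
      · obtain ⟨t, htc, htb⟩ := not_subset.1 fun hcb => hbc
          (((mem_powerset.1 hb).trans hqc).antisymm hcb)
        rw [hnorm _ ⟨t, htc, piecewise_eq_of_notMem _ _ _ htb⟩, mul_zero]
    rw [sum_congr rfl hterm, sum_ite_eq']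
    by_cases hcq : c = q
    · simp [hcq]
    · rw [if_neg fun hc => hcq ((mem_powerset.1 hc).antisymm hqc), if_neg hcq]
  · obtain ⟨t, htq, htc⟩ := not_subset.1 hqc
    rw [if_neg fun hcq : c = q => htc (hcq ▸ htq)]
    refine sum_powerset_neg_one_pow_mul_eq_zero htq fun b _ _ => hdep _ _ fun s hs => ?_
    have hst : s ≠ t := fun h => htc (h ▸ hs)
    simp [piecewise, hst]

theorem sum_powerset_neg_one_pow_mul_energy {K : Finset (Finset S)}
    {E : Finset S → (∀ s, V s) → ℝ} (hdep : ∀ c ∈ K, DependsOnlyOn c (E c))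
    (hnorm : ∀ c ∈ K, NormalizedZero c (E c)) {q : Finset S} (hq : q.Nonempty) (hqK : q ∈ K)
    (k : ℝ) (x : ∀ s, V s) :
    ∑ b ∈ q.powerset, (-1 : ℝ) ^ #b * (∑ c ∈ K, E c (b.piecewise x 0) + k) =
      (-1) ^ #q * E q x := by
  obtain ⟨t, ht⟩ := hq
  have hconst : ∑ b ∈ q.powerset, (-1 : ℝ) ^ #b * k = 0 :=
    sum_powerset_neg_one_pow_mul_eq_zero ht fun _ _ _ => rfl
  simp only [mul_add, sum_add_distrib, hconst, add_zero, mul_sum]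
  rw [sum_comm, sum_congr rfl fun c hc =>
    sum_powerset_neg_one_pow_mul_piecewise (hdep c hc) (hnorm c hc) x, sum_ite_eq', if_pos hqK]

theorem potential_eq_of_energy_eq {K K' : Finset (Finset S)}
    {E E' : Finset S → (∀ s, V s) → ℝ}
    (hdep : ∀ c ∈ K, DependsOnlyOn c (E c)) (hnorm : ∀ c ∈ K, NormalizedZero c (E c))
    (hdep' : ∀ c ∈ K', DependsOnlyOn c (E' c)) (hnorm' : ∀ c ∈ K', NormalizedZero c (E' c))
    {q : Finset S} (hq : q.Nonempty) (hqK : q ∈ K) (hqK' : q ∈ K') {k k' : ℝ} {x : ∀ s, V s}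
    (henergy : ∀ b ⊆ q,
      ∑ c ∈ K, E c (b.piecewise x 0) + k = ∑ c ∈ K', E' c (b.piecewise x 0) + k') :
    E q x = E' q x := by
  have h := sum_powerset_neg_one_pow_mul_energy hdep hnorm hq hqK k x
  rw [sum_congr rfl fun b hb => by rw [henergy b (mem_powerset.1 hb)],
    sum_powerset_neg_one_pow_mul_energy hdep' hnorm' hq hqK' k' x] at h
  exact mul_left_cancel₀ (pow_ne_zero _ (neg_ne_zero.2 one_ne_zero)) h.symm

end Mobius

section Marginal

variable {S : Type*} [Fintype S] [DecidableEq S] {V : S → Type*}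
  [∀ s, Fintype (V s)] [∀ s, DecidableEq (V s)]

theorem marginal_mul_left_of_dependsOnlyOn {A : Finset S} {g h : (∀ s, V s) → ℝ}
    (hg : DependsOnlyOn A g) (z : ∀ s, V s) :
    marginal (fun x => g x * h x) A (A.restrict z) = g z * marginal h A (A.restrict z) := by
  rw [marginal, marginal, mul_sum]
  exact sum_congr rfl fun x hx =>
    congrArg (· * h x) (hg x z fun s hs => (mem_filter.1 hx).2 ⟨s, hs⟩)

theorem marginal_restrict_pos {A : Finset S} {h : (∀ s, V s) → ℝ} (hpos : ∀ x, 0 < h x)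
    (z : ∀ s, V s) : 0 < marginal h A (A.restrict z) :=
  sum_pos (fun x _ => hpos x) ⟨z, mem_filter.2 ⟨mem_univ z, fun _ => rfl⟩⟩

theorem marginal_eq_of_forall_notMem {A q : Finset S} (hqA : q ⊆ A) {h : (∀ s, V s) → ℝ}
    (hh : DependsOnlyOn qᶜ h) {y y' : ∀ s : A, V s} (hyy' : ∀ s : A, s.1 ∉ q → y s = y' s) :
    marginal h A y = marginal h A y' := by
  -- overwriting the coordinates in `q` by those of `y'` maps the fiber of `y` onto that of `y'`
  let overwrite (w : ∀ s : A, V s) (x : ∀ s, V s) : ∀ s, V s :=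
    fun s => if hs : s ∈ q then w ⟨s, hqA hs⟩ else x s
  have hmaps : ∀ {w w' : ∀ s : A, V s}, (∀ s : A, s.1 ∉ q → w s = w' s) →
      ∀ x, (∀ s : A, x s = w s) → ∀ s : A, overwrite w' x s = w' s := by
    intro w w' hww' x hx s
    by_cases hs : s.1 ∈ q
    · simp [overwrite, hs]
    · simp [overwrite, hs, hx s, hww' s hs]
  have hinv : ∀ {w w' : ∀ s : A, V s} x, (∀ s : A, x s = w s) →
      overwrite w (overwrite w' x) = x := by
    intro w w' x hx
    funext s
    by_cases hs : s ∈ q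
    · simp [overwrite, hs, hx ⟨s, hqA hs⟩]
    · simp [overwrite, hs]
  refine sum_nbij' (overwrite y') (overwrite y) (fun x hx => ?_) (fun x hx => ?_)
    (fun x hx => hinv x (mem_filter.1 hx).2) (fun x hx => hinv x (mem_filter.1 hx).2)
    fun x _ => hh _ _ fun s hs => by simp [overwrite, mem_compl.1 hs]
  · exact mem_filter.2 ⟨mem_univ _, hmaps hyy' x (mem_filter.1 hx).2⟩
  · exact mem_filter.2 ⟨mem_univ _, hmaps (fun s hs => (hyy' s hs).symm) x (mem_filter.1 hx).2⟩

theorem exists_log_marginal_gibbs_piecewise_eq [∀ s, Zero (V s)] {C : Finset (Finset S)}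
    {E : Finset S → (∀ s, V s) → ℝ} (hdep : ∀ c ∈ C, DependsOnlyOn c (E c)) {Z : ℝ} (hZ : 0 < Z)
    {p : (∀ s, V s) → ℝ} (hp : ∀ x, p x = 1 / Z * exp (-∑ c ∈ C, E c x))
    {q A : Finset S} (hqA : q ⊆ A) (hA : ∀ c ∈ C, (c ∩ q).Nonempty → c ⊆ A) (x : ∀ s, V s) :
    ∃ k, ∀ b ⊆ q, log (marginal p A (A.restrict (b.piecewise x 0))) =
      -∑ c ∈ C with (c ∩ q).Nonempty, E c (b.piecewise x 0) + k := by
  set g : (∀ s, V s) → ℝ := fun x => exp (-∑ c ∈ C with (c ∩ q).Nonempty, E c x)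
  set h : (∀ s, V s) → ℝ := fun x => 1 / Z * exp (-∑ c ∈ C with ¬(c ∩ q).Nonempty, E c x)
  have hpgh : p = fun x => g x * h x := by
    funext x
    rw [hp, ← sum_filter_add_sum_filter_not C fun c => (c ∩ q).Nonempty, neg_add, exp_add]
    ring
  have hg : DependsOnlyOn A g := fun x y hxy => by
    refine congrArg (fun e => exp (-e)) (sum_congr rfl fun c hc => ?_)
    obtain ⟨hcC, hcq⟩ := mem_filter.1 hc
    exact hdep c hcC x y fun s hs => hxy s (hA c hcC hcq hs)
  have hh : DependsOnlyOn qᶜ h := fun x y hxy => by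
    refine congrArg (fun e => 1 / Z * exp (-e)) (sum_congr rfl fun c hc => ?_)
    obtain ⟨hcC, hcq⟩ := mem_filter.1 hc
    exact hdep c hcC x y fun s hs => hxy s (mem_compl.2 fun hsq => hcq ⟨s, mem_inter.2 ⟨hs, hsq⟩⟩)
  refine ⟨log (marginal h A (A.restrict 0)), fun b hb => ?_⟩
  have hfiber : marginal h A (A.restrict (b.piecewise x 0)) = marginal h A (A.restrict 0) :=
    marginal_eq_of_forall_notMem hqA hh fun s hs =>
      piecewise_eq_of_notMem _ _ _ fun hsb => hs (hb hsb)
  rw [hpgh, marginal_mul_left_of_dependsOnlyOn hg, hfiber,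
    log_mul (exp_pos _).ne' (marginal_restrict_pos (fun _ => by positivity) _).ne', log_exp]

end Marginal

theorem lap_population_consistency_general
    {S : Type*} [Fintype S] [DecidableEq S] {V : S → Type*}
    [∀ s, Fintype (V s)] [∀ s, DecidableEq (V s)] [∀ s, Zero (V s)]
    (C : Finset (Finset S)) (hC : ∀ c ∈ C, c.Nonempty)
    (E : Finset S → (∀ s, V s) → ℝ)
    (hEdep : ∀ c ∈ C, DependsOnlyOn c (E c))
    (hEnorm : ∀ c ∈ C, NormalizedZero c (E c))
    (Z : ℝ) (hZ : 0 < Z)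
    (p : (∀ s, V s) → ℝ)
    (hp : ∀ x, p x = (1 / Z) * Real.exp (-(∑ c ∈ C, E c x)))
    (q : Finset S) (hq : q ∈ C)
    (A : Finset S) (hA : A = (C.filter fun c => (c ∩ q).Nonempty).biUnion id)
    (G : Set ((∀ s : A, V s) → ℝ))
    (hG : ∀ g ∈ G, (∀ y, 0 < g y) ∧ (∑ y, g y = 1))
    (hmem : marginal p A ∈ G)
    (r : (∀ s : A, V s) → ℝ) (hr : r ∈ G)
    (hrmax : ∀ g ∈ G,
      ∑ y, marginal p A y * Real.log (g y) ≤ ∑ y, marginal p A y * Real.log (r y)) :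
    r = marginal p A ∧
    ∀ (Z' : ℝ) (F : Finset S → (∀ s : A, V s) → ℝ), 0 < Z' →
      (∀ c : Finset S, c ⊆ A → c.Nonempty → DependsOnlyOnSub A c (F c)) →
      (∀ c : Finset S, c ⊆ A → c.Nonempty → NormalizedZeroSub A c (F c)) →
      (∀ y : ∀ s : A, V s,
        r y = (1 / Z') * Real.exp (-(∑ c ∈ A.powerset.filter (fun c => c.Nonempty), F c y))) →
      ∀ x : ∀ s, V s, F q (A.restrict x) = E q x := by
  obtain ⟨hmpos, hmsum⟩ := hG _ hmem
  obtain ⟨hrpos, hrsum⟩ := hG _ hr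
  have hreq : r = marginal p A := (eq_of_sum_mul_log_le_sum_mul_log (fun y => (hmpos y).le)
    hrpos (hmsum.trans hrsum.symm) (hrmax _ hmem)).symm
  refine ⟨hreq, fun Z' F hZ' hFdep hFnorm hrep x => ?_⟩
  have hqq : (q ∩ q).Nonempty := by rw [inter_self]; exact hC q hq
  have hCA : ∀ c ∈ C, (c ∩ q).Nonempty → c ⊆ A := fun c hc hcq =>
    hA ▸ subset_biUnion_of_mem id (mem_filter.2 ⟨hc, hcq⟩)
  have hqA : q ⊆ A := hCA q hq hqq
  obtain ⟨k, hk⟩ := exists_log_marginal_gibbs_piecewise_eq hEdep hZ hp hqA hCA x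
  have hFdep' : ∀ c ∈ A.powerset.filter (fun c => c.Nonempty),
      DependsOnlyOn c (fun x => F c (A.restrict x)) := fun c hc =>
    (hFdep c (mem_powerset.1 (mem_filter.1 hc).1) (mem_filter.1 hc).2).comp_restrict
  have hFnorm' : ∀ c ∈ A.powerset.filter (fun c => c.Nonempty),
      NormalizedZero c (fun x => F c (A.restrict x)) := fun c hc =>
    (hFnorm c (mem_powerset.1 (mem_filter.1 hc).1) (mem_filter.1 hc).2).comp_restrict
      (mem_powerset.1 (mem_filter.1 hc).1)
  refine (potential_eq_of_energy_eq (K := C.filter fun c => (c ∩ q).Nonempty) (k := -k)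
    (k' := log Z') (fun c hc => hEdep c (mem_filter.1 hc).1)
    (fun c hc => hEnorm c (mem_filter.1 hc).1) hFdep' hFnorm' (hC q hq)
    (mem_filter.2 ⟨hq, hqq⟩) (mem_filter.2 ⟨mem_powerset.2 hqA, hC q hq⟩) fun b hb => ?_).symm
  have hlog := hk b hb
  rw [← hreq, hrep, log_mul (by positivity) (exp_pos _).ne', log_exp, one_div, log_inv] at hlog
  linarith

/-- **Population consistency of the LAP estimator.** Let `p` be a positive Gibbs
distribution over `C` with zero-normalized potentials `E_c`, let `q ∈ C` have
1-neighborhood `A`, and let `G` be any set of strictly positive probability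
distributions on configurations of `A` containing the marginal `p_A`. If `r ∈ G`
maximizes the population log-likelihood `r' ↦ Σ_y p_A(y) log r'(y)` over `G`,
then `r = p_A`; consequently, in any zero-normalized Gibbs representation
`r(y) = (1/Z') exp(−Σ_c F_c(y_c))` of `r` (sum over all nonempty `c ⊆ A`), the
potential assigned to `q` equals `E_q`. -/
theorem lap_population_consistency
    {S : Type*} [Fintype S] [DecidableEq S] {V : S → Type*}
    [∀ s, Fintype (V s)] [∀ s, DecidableEq (V s)] [∀ s, Zero (V s)]
    (C : Finset (Finset S)) (hC : ∀ c ∈ C, c.Nonempty)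
    (E : Finset S → (∀ s, V s) → ℝ)
    (hEdep : ∀ c ∈ C, DependsOnlyOn c (E c))
    (hEnorm : ∀ c ∈ C, NormalizedZero c (E c))
    (Z : ℝ) (hZ : 0 < Z)
    (p : (∀ s, V s) → ℝ)
    (hp : ∀ x, p x = (1 / Z) * Real.exp (-(∑ c ∈ C, E c x)))
    (hp_sum : ∑ x, p x = 1)
    (q : Finset S) (hq : q ∈ C)
    (A : Finset S) (hA : A = (C.filter fun c => (c ∩ q).Nonempty).biUnion id)
    (G : Set ((∀ s : A, V s) → ℝ))
    (hG : ∀ g ∈ G, (∀ y, 0 < g y) ∧ (∑ y, g y = 1))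
    (hmem : marginal p A ∈ G)
    (r : (∀ s : A, V s) → ℝ) (hr : r ∈ G)
    (hrmax : ∀ g ∈ G,
      ∑ y, marginal p A y * Real.log (g y) ≤ ∑ y, marginal p A y * Real.log (r y)) :
    r = marginal p A ∧
    ∀ (Z' : ℝ) (F : Finset S → (∀ s : A, V s) → ℝ), 0 < Z' →
      (∀ c : Finset S, c ⊆ A → c.Nonempty → DependsOnlyOnSub A c (F c)) →
      (∀ c : Finset S, c ⊆ A → c.Nonempty → NormalizedZeroSub A c (F c)) →
      (∀ y : ∀ s : A, V s,
        r y = (1 / Z') * Real.exp (-(∑ c ∈ A.powerset.filter (fun c => c.Nonempty), F c y))) →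
      ∀ x : ∀ s, V s, F q (A.restrict x) = E q x :=
  lap_population_consistency_general C hC E hEdep hEnorm Z hZ p hp q hq A hA G hG hmem r hr hrmax
end
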